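/- With the setup of the previous statement, $[x_i^+, T_{w(i,m)}(x_{i-1}^+)] = (-1)^{m-1} h_{-\theta}(m)$ if $i = 0$, and $[x_i^+, T_{w(i,m)}(x_{i-1}^+)] = (-1)^{m-1} h_i(m)$ if $i \ne 0$, where $h_i = E_{i,i} - E_{i+1,i+1}$ and $h_{-\theta} = E_{N,N} - E_{1,1}$. -/

import Mathlib

/-!
Write `x_k⁺ = E_{k,k+1}(ε_k)` with `ε_k = 1` for the affine node `k = 0` and `0` otherwise. On a
matrix unit `E_{a,b}(s)` the braid operator `T_k` acts as the transposition of the indices `k` and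
`k + 1`, shifting the degree by `±ε_k`, up to a sign on `E_{k+1,k}`. Hence `T_{w(i,m)}(x_{i-1}⁺)`
is a single signed matrix unit, which can be tracked through the word: the tail
`s_{i+1} ⋯ s_{i-2}` sends `E_{i-1,i}(ε_{i-1})` to `E_{i+1,i}(1 - ε_i)`, because the `ε_k` over a
full cycle of nodes add up to `1`, and each factor `t_{-α_{i+1}}` sends `E_{i+1,i}(s)` to
`-E_{i+1,i}(s + 1)`. So `T_{w(i,m)}(x_{i-1}⁺) = (-1)^{m-1} E_{i+1,i}(m - ε_i)`, and its bracket
with `x_i⁺` is `(-1)^{m-1} (E_{i,i} - E_{i+1,i+1})(m)`; no central term appears since `m ≠ 0`.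
-/

/-- A copy of the affine Lie algebra `ĝl_N = gl_N ⊗ ℂ[t,t⁻¹] ⊕ ℂc` inside a Lie algebra `L`:
a family `E i j s` (the elements `E_{i,j}(s) = E_{i,j} ⊗ tˢ`, with matrix-unit indices in
`ZMod N`, the label `N` corresponding to `0`) and a central element `c`, satisfying
`[X(r), Y(s)] = [X,Y](r+s) + r δ_{r+s,0} tr(XY) c`. -/
structure AffineGLData (N : ℕ) (L : Type) [LieRing L] [LieAlgebra ℂ L] where
  E : ZMod N → ZMod N → ℤ → L
  c : L
  central : ∀ y : L, ⁅c, y⁆ = 0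
  bracket_eq : ∀ (i j k l : ZMod N) (r s : ℤ),
    ⁅E i j r, E k l s⁆ =
      (if j = k then E i l (r + s) else 0) - (if l = i then E k j (r + s) else 0) +
      (if j = k ∧ l = i ∧ r + s = 0 then (r : ℂ) • c else 0)

variable {N : ℕ} {L : Type} [LieRing L] [LieAlgebra ℂ L]

/-- The affine Chevalley generator `x_k⁺` (`x_0⁺ = E_{N,1}(1)`, `x_i⁺ = E_{i,i+1}(0)`). -/
def xp (d : AffineGLData N L) (k : ZMod N) : L :=
  if k = 0 then d.E 0 1 1 else d.E k (k + 1) 0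

/-- The affine Chevalley generator `x_k⁻` (`x_0⁻ = E_{1,N}(-1)`, `x_i⁻ = E_{i+1,i}(0)`). -/
def xm (d : AffineGLData N L) (k : ZMod N) : L :=
  if k = 0 then d.E 1 0 (-1) else d.E (k + 1) k 0

/-- The exponential of `ad X` (exact whenever `(ad X)^3 = 0`, as holds for the
adjoint action of the Chevalley generators on `ĝl_N`). -/
noncomputable def expAd (X A : L) : L :=
  A + ⁅X, A⁆ + (2 : ℂ)⁻¹ • ⁅X, ⁅X, A⁆⁆

/-- The braid operator `T_k = exp(ad x_k⁺) exp(ad (-x_k⁻)) exp(ad x_k⁺)` on `ĝl_N`. -/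
noncomputable def Taff (d : AffineGLData N L) (k : ZMod N) (A : L) : L :=
  expAd (xp d k) (expAd (-(xm d k)) (expAd (xp d k) A))

/-- `TaffComp d [k₁,…,kₗ] A = T_{k₁} (T_{k₂} ⋯ (T_{kₗ} A))`. -/
noncomputable def TaffComp (d : AffineGLData N L) (ks : List (ZMod N)) (A : L) : L :=
  ks.foldr (Taff d) A

/-- The reduced word `s_{i+1} s_{i+2} ⋯ s_{i-2}` (length `N-2`). -/
def tailWord (N : ℕ) (i : ZMod N) : List (ZMod N) :=
  (List.range (N - 2)).map (fun k => i + (k : ZMod N) + 1)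

/-- The reduced word of the translation `t_{-α_{i+1}}`; for `i = 1` this is
`s_2 s_3 ⋯ s_{N-1} s_0 s_1 s_0 s_{N-1} ⋯ s_3`. -/
def tWord (N : ℕ) (i : ZMod N) : List (ZMod N) :=
  (List.range (N - 2)).map (fun k => i + (k : ZMod N) + 1) ++ [i - 1, i, i - 1] ++
    ((List.range (N - 3)).map (fun k => i + (k : ZMod N) + 2)).reverse

/-- The word of `w(i,m) = t_{-α_{i+1}}^{m-1} s_{i+1} s_{i+2} ⋯ s_{i-3} s_{i-2}`. -/
def wWord (N : ℕ) (i : ZMod N) (m : ℕ) : List (ZMod N) :=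
  (List.replicate (m - 1) (tWord N i)).flatten ++ tailWord N i

def xpDeg (k : ZMod N) : ℤ := if k = 0 then 1 else 0

theorem sum_range_xpDeg_add [NeZero N] (c : ZMod N) :
    ∑ k ∈ Finset.range N, xpDeg (c + (k : ZMod N)) = 1 := by
  have hcast : ∑ k ∈ Finset.range N, xpDeg (c + (k : ZMod N)) = ∑ x : ZMod N, xpDeg (c + x) := by
    refine Finset.sum_nbij' (fun k => (k : ZMod N)) ZMod.val (by simp) ?_ ?_ ?_ (by simp)
    · simp [ZMod.val_lt]
    · intro k hk
      exact ZMod.val_cast_of_lt (Finset.mem_range.1 hk)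
    · simp
  rw [hcast]
  exact (Equiv.sum_comp (Equiv.addLeft c) xpDeg).trans (by simp [xpDeg])

theorem ne_of_eq_add_natCast {a b : ZMod N} {k : ℕ} (h0 : 0 < k) (hk : k < N)
    (hb : b = a + k) : a ≠ b := by
  rw [hb, Ne, left_eq_add, ZMod.natCast_eq_zero_iff]
  exact fun hdvd => (Nat.le_of_dvd h0 hdvd).not_gt hk

theorem xp_eq (d : AffineGLData N L) (k : ZMod N) : xp d k = d.E k (k + 1) (xpDeg k) := by
  unfold xp xpDeg; split_ifs with h <;> simp [h]

theorem xm_eq (d : AffineGLData N L) (k : ZMod N) : xm d k = d.E (k + 1) k (-xpDeg k) := by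
  unfold xm xpDeg; split_ifs with h <;> simp [h]

-- In `tailWord` and `tWord` the list `List.range _` is coerced to `List (ZMod N)` by a `do` block.
theorem tailWord_eq (i : ZMod N) :
    tailWord N i = (List.range (N - 2)).map fun k : ℕ => (i + 1) + (k : ZMod N) := by
  simp only [tailWord, bind_pure_comp, List.map_eq_map, List.map_map]
  exact List.map_congr_left fun _ _ => add_right_comm _ _ _

theorem tWord_eq (i : ZMod N) :
    tWord N i = tailWord N i ++ [i - 1, i, i - 1] ++
      ((List.range (N - 3)).map fun k : ℕ => i + (k : ZMod N) + 2).reverse := by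
  simp only [tWord, tailWord, bind_pure_comp, List.map_eq_map, List.map_map]
  rfl

namespace AffineGLData

variable (d : AffineGLData N L)

theorem lie_E_E_swap (p q : ZMod N) {r s : ℤ} (hrs : r + s ≠ 0) :
    ⁅d.E p q r, d.E q p s⁆ = d.E p p (r + s) - d.E q q (r + s) := by
  simp [d.bracket_eq, hrs]

theorem Taff_smul (k : ZMod N) (t : ℂ) (A : L) : Taff d k (t • A) = t • Taff d k A := by
  simp only [Taff, expAd, lie_smul, lie_add, smul_add, smul_comm t]

theorem TaffComp_smul (ks : List (ZMod N)) (t : ℂ) (A : L) :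
    TaffComp d ks (t • A) = t • TaffComp d ks A := by
  induction ks with
  | nil => rfl
  | cons k ks ih => simp only [TaffComp, List.foldr_cons] at ih ⊢; rw [ih, Taff_smul]

theorem TaffComp_neg (ks : List (ZMod N)) (A : L) : TaffComp d ks (-A) = -TaffComp d ks A := by
  simpa using d.TaffComp_smul ks (-1) A

theorem TaffComp_append (ks ls : List (ZMod N)) (A : L) :
    TaffComp d (ks ++ ls) A = TaffComp d ks (TaffComp d ls A) :=
  List.foldr_append

theorem Taff_E_of_ne (k : ZMod N) {a b : ZMod N} (s : ℤ)
    (hak : a ≠ k) (hak1 : a ≠ k + 1) (hbk : b ≠ k) (hbk1 : b ≠ k + 1) :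
    Taff d k (d.E a b s) = d.E a b s := by
  simp [Taff, expAd, xp_eq, xm_eq, d.bracket_eq, hbk, hbk1, hak.symm, hak1.symm]

theorem TaffComp_E_of_forall_ne (ks : List (ZMod N)) {a b : ZMod N} (s : ℤ)
    (h : ∀ k ∈ ks, a ≠ k ∧ a ≠ k + 1 ∧ b ≠ k ∧ b ≠ k + 1) :
    TaffComp d ks (d.E a b s) = d.E a b s := by
  induction ks with
  | nil => rfl
  | cons k ks ih =>
    obtain ⟨hak, hak1, hbk, hbk1⟩ := h k List.mem_cons_self
    simp only [TaffComp, List.foldr_cons] at ih ⊢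
    rw [ih fun j hj => h j (List.mem_cons_of_mem k hj), d.Taff_E_of_ne k s hak hak1 hbk hbk1]

section Nontrivial

variable [Fact (1 < N)]

theorem Taff_E_succ_left (k : ZMod N) {b : ZMod N} (s : ℤ) (hbk : b ≠ k) (hbk1 : b ≠ k + 1) :
    Taff d k (d.E (k + 1) b s) = d.E k b (xpDeg k + s) := by
  simp [Taff, expAd, xp_eq, xm_eq, d.bracket_eq, lie_add, hbk, hbk1]

theorem Taff_E_succ_right (k : ZMod N) {a : ZMod N} (s : ℤ) (hak : a ≠ k) (hak1 : a ≠ k + 1) :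
    Taff d k (d.E a (k + 1) s) = d.E a k (-xpDeg k + s) := by
  simp [Taff, expAd, xp_eq, xm_eq, d.bracket_eq, lie_add, hak.symm, hak1.symm]

theorem Taff_E_succ_self (k : ZMod N) (s : ℤ) (hs : xpDeg k + s ≠ 0) :
    Taff d k (d.E (k + 1) k s) = -d.E k (k + 1) (2 * xpDeg k + s) := by
  simp [Taff, expAd, xp_eq, xm_eq, d.bracket_eq, lie_add, lie_sub, lie_smul, smul_add, smul_sub,
    hs]
  rw [two_mul, add_assoc (xpDeg k)]
  module

theorem TaffComp_range_E (c b : ZMod N) (n : ℕ) (s : ℤ) (hb : ∀ k ≤ n, b ≠ c + (k : ZMod N)) :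
    TaffComp d ((List.range n).map fun k : ℕ => c + (k : ZMod N)) (d.E (c + n) b s) =
      d.E c b (s + ∑ k ∈ Finset.range n, xpDeg (c + (k : ZMod N))) := by
  induction n generalizing s with
  | zero => simp [TaffComp]
  | succ n ih =>
    have hstep :
        Taff d (c + n) (d.E (c + ((n + 1 : ℕ) : ZMod N)) b s) =
          d.E (c + n) b (xpDeg (c + (n : ZMod N)) + s) := by
      rw [Nat.cast_succ, ← add_assoc]
      exact d.Taff_E_succ_left _ s (hb n n.le_succ) (by simpa [add_assoc] using hb (n + 1) le_rfl)
    rw [List.range_succ, List.map_append, TaffComp_append]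
    simp only [List.map_cons, List.map_nil, TaffComp, List.foldr_cons, List.foldr_nil] at ih ⊢
    rw [hstep, ih _ fun k hk => hb k (hk.trans n.le_succ), Finset.sum_range_succ]
    congr 1
    ring

end Nontrivial

theorem TaffComp_tailWord [NeZero N] [Fact (1 < N)] (i : ZMod N) (s : ℤ) :
    TaffComp d (tailWord N i) (d.E (i - 1) i s) =
      d.E (i + 1) i (s + 1 - xpDeg i - xpDeg (i - 1)) := by
  have hN : 1 < N := Fact.out
  have hcast : ((N - 2 : ℕ) : ZMod N) = -2 := by
    simp [Nat.cast_sub (by omega : 2 ≤ N)]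
  have hrow : (i + 1) + ((N - 2 : ℕ) : ZMod N) = i - 1 := by rw [hcast]; ring
  have hsum : ∑ k ∈ Finset.range (N - 2), xpDeg (i + 1 + (k : ZMod N)) + xpDeg (i - 1) + xpDeg i
      = 1 := by
    have hrow' : (i + 1) + ((N - 2 + 1 : ℕ) : ZMod N) = i := by push_cast [hcast]; ring
    rw [← sum_range_xpDeg_add (i + 1),
      show Finset.range N = Finset.range (N - 2 + 1 + 1) by congr 1; omega, Finset.sum_range_succ,
      Finset.sum_range_succ, hrow, hrow']
  have hchain := d.TaffComp_range_E (i + 1) i (N - 2) s fun k hk =>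
    ne_of_eq_add_natCast (k := k + 1) k.succ_pos (by omega) (by push_cast; ring)
  rw [hrow] at hchain
  rw [tailWord_eq, hchain]
  congr 1
  linarith

theorem TaffComp_middle (hN : 3 ≤ N) (i : ZMod N) (s : ℤ) (hs : xpDeg i + s ≠ 0) :
    TaffComp d [i - 1, i, i - 1] (d.E (i + 1) i s) =
      -d.E (i - 1) i (s + xpDeg (i - 1) + xpDeg i) := by
  have : Fact (1 < N) := ⟨by omega⟩
  obtain ⟨j, rfl⟩ : ∃ j, i = j + 1 := ⟨i - 1, by ring⟩
  have h1 : j ≠ j + 1 := ne_of_eq_add_natCast (k := 1) one_pos (by omega) (by simp)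
  have h2 : j ≠ j + 1 + 1 := ne_of_eq_add_natCast (k := 2) two_pos (by omega) (by push_cast; ring)
  simp only [add_sub_cancel_right, TaffComp, List.foldr_cons, List.foldr_nil]
  rw [d.Taff_E_succ_right j s h2.symm (by simp), d.Taff_E_succ_left (j + 1) _ h1 h2,
    d.Taff_E_succ_self j _ (by omega)]
  congr 2
  ring

theorem TaffComp_tWord [NeZero N] (hN : 3 ≤ N) (i : ZMod N) (s : ℤ) (hs : xpDeg i + s ≠ 0) :
    TaffComp d (tWord N i) (d.E (i + 1) i s) = -d.E (i + 1) i (s + 1) := by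
  have : Fact (1 < N) := ⟨by omega⟩
  have hfix : ∀ j ∈ ((List.range (N - 3)).map fun k : ℕ => i + (k : ZMod N) + 2).reverse,
      i + 1 ≠ j ∧ i + 1 ≠ j + 1 ∧ i ≠ j ∧ i ≠ j + 1 := by
    simp only [List.mem_reverse, List.mem_map, List.mem_range]
    rintro _ ⟨k, hk, rfl⟩
    exact ⟨ne_of_eq_add_natCast (k := k + 1) (by omega) (by omega) (by push_cast; ring),
      ne_of_eq_add_natCast (k := k + 2) (by omega) (by omega) (by push_cast; ring),
      ne_of_eq_add_natCast (k := k + 2) (by omega) (by omega) (by push_cast; ring),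
      ne_of_eq_add_natCast (k := k + 3) (by omega) (by omega) (by push_cast; ring)⟩
  rw [tWord_eq, TaffComp_append, TaffComp_append, d.TaffComp_E_of_forall_ne _ s hfix,
    d.TaffComp_middle hN i s hs, TaffComp_neg, TaffComp_tailWord]
  congr 2
  ring

theorem TaffComp_wWord_succ [NeZero N] (hN : 3 ≤ N) (i : ZMod N) (m : ℕ) :
    TaffComp d (wWord N i (m + 1)) (xp d (i - 1)) =
      (-1 : ℂ) ^ m • d.E (i + 1) i (m + 1 - xpDeg i) := by
  have : Fact (1 < N) := ⟨by omega⟩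
  induction m with
  | zero =>
    rw [show wWord N i 1 = tailWord N i by simp [wWord], xp_eq, sub_add_cancel,
      TaffComp_tailWord, pow_zero, one_smul]
    congr 1
    ring
  | succ m ih =>
    rw [show wWord N i (m + 1 + 1) = tWord N i ++ wWord N i (m + 1) by
        simp [wWord, List.replicate_succ],
      TaffComp_append, ih, TaffComp_smul, d.TaffComp_tWord hN i _ (by omega), pow_succ,
      mul_neg_one, neg_smul, ← smul_neg]
    congr 3
    push_cast
    ring

end AffineGLData

theorem stmt16 (N : ℕ) [NeZero N] (hN : 3 ≤ N) (L : Type) [LieRing L] [LieAlgebra ℂ L]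
    (d : AffineGLData N L) (i : ZMod N) (m : ℕ) (hm : 1 ≤ m) :
    ⁅xp d i, TaffComp d (wWord N i m) (xp d (i - 1))⁆ =
      ((-1 : ℂ)) ^ (m - 1) •
        (if i = 0 then d.E 0 0 (m : ℤ) - d.E 1 1 (m : ℤ)
         else d.E i i (m : ℤ) - d.E (i + 1) (i + 1) (m : ℤ)) := by
  obtain ⟨m, rfl⟩ := Nat.exists_eq_add_of_le' hm
  have hdeg : xpDeg i + ((m : ℤ) + 1 - xpDeg i) = ((m + 1 : ℕ) : ℤ) := by push_cast; ring
  rw [d.TaffComp_wWord_succ hN i m, lie_smul, xp_eq, d.lie_E_E_swap _ _ (by omega), hdeg,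
    Nat.add_sub_cancel]
  split_ifs with h
  · subst h
    simp
  · rfl
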